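/- arXiv:1510.00908 — 3 statements merged into one kernel-verified Lean document; each statement's English description precedes it below -/
import Mathlib

section
/- Under the stated assumptions, for any parameter ζ with R − ζ·1 and L − ζ·1 invertible, the inverse-shifted tau-function satisfies τ[ζ̄]/τ = 1 − ⟨a| F B[ζ̄] |α⟩ and also τ[ζ̄]/τ = 1 + ⟨b[ζ̄]| G A |β⟩, where ω[ζ̄] = T_ζ⁻¹ω; explicitly, det(1 + A(R−ζ) B(L−ζ)⁻¹) = det(1 + A B)·(1 − ⟨a| (1+BA)⁻¹ B(L−ζ)⁻¹ |α⟩) = det(1 + A B)·(1 + ⟨b|(L−ζ)⁻¹ (1+AB)⁻¹ A |β⟩). -/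
/-!
Subtracting `ζ` from both `L` and `R` leaves the Sylvester equations unchanged, so with
`X = L − ζ`, `Y = R − ζ` we have `XA − AY = |α⟩⟨a|` and `YB − BX = |β⟩⟨b|`. Hence
`1 + AYBX⁻¹` is `1 + AB` plus a rank-one matrix (after conjugating by `X` for the first
identity), and the matrix determinant lemma together with `B(1 + AB)⁻¹ = (1 + BA)⁻¹B` gives
both formulas.
-/

open Matrix

namespace Matrix

variable {m n K : Type*} [Fintype m] [DecidableEq m] [Fintype n] [CommRing K]

theorem det_add_vecMulVec {M : Matrix m m K} (hM : IsUnit M.det) (u v : m → K) :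
    (M + vecMulVec u v).det = M.det * (1 + v ⬝ᵥ M⁻¹ *ᵥ u) := by
  have hfactor : M + vecMulVec u v = M * (1 + vecMulVec (M⁻¹ *ᵥ u) v) := by
    rw [Matrix.mul_add, Matrix.mul_one, mul_vecMulVec, mulVec_mulVec, mul_nonsing_inv M hM,
      one_mulVec]
  rw [hfactor, det_mul, vecMulVec_eq Unit, det_one_add_replicateCol_mul_replicateRow]

theorem mul_nonsing_inv_one_add_mul [DecidableEq n] (A : Matrix m n K) (B : Matrix n m K)
    (h : IsUnit (1 + A * B).det) : B * (1 + A * B)⁻¹ = (1 + B * A)⁻¹ * B := by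
  have h' : IsUnit (1 + B * A).det := by rwa [← det_one_add_mul_comm]
  have hcomm : (1 + B * A) * B = B * (1 + A * B) := by
    rw [Matrix.add_mul, Matrix.mul_add, Matrix.one_mul, Matrix.mul_one, Matrix.mul_assoc]
  calc B * (1 + A * B)⁻¹ = (1 + B * A)⁻¹ * ((1 + B * A) * B) * (1 + A * B)⁻¹ := by
        rw [nonsing_inv_mul_cancel_left _ _ h']
    _ = (1 + B * A)⁻¹ * B := by
        rw [hcomm, ← Matrix.mul_assoc, mul_nonsing_inv_cancel_right _ _ h]

theorem sub_smul_one_mul_sub_mul_sub_smul_one [DecidableEq n] (P : Matrix m m K)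
    (Q : Matrix n n K) (A : Matrix m n K) (ζ : K) :
    (P - ζ • 1) * A - A * (Q - ζ • 1) = P * A - A * Q := by
  simp only [Matrix.sub_mul, Matrix.mul_sub, Matrix.smul_mul, Matrix.mul_smul,
    Matrix.one_mul, Matrix.mul_one]
  abel

variable {X : Matrix m m K} {Y : Matrix n n K} {A : Matrix m n K} {B : Matrix n m K}

theorem det_one_add_mul_mul_nonsing_inv_eq_sub [DecidableEq n] {α : m → K} {a : n → K}
    (hA : X * A - A * Y = vecMulVec α a) (hX : IsUnit X.det) (hC : IsUnit (1 + A * B).det) :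
    (1 + A * Y * (B * X⁻¹)).det
      = (1 + A * B).det * (1 - a ᵥ* ((1 + B * A)⁻¹ * (B * X⁻¹)) ⬝ᵥ α) := by
  have hAY : A * Y = X * A - vecMulVec α a := by rw [← hA, sub_sub_cancel]
  have hconj : 1 + X⁻¹ * (A * Y * B) = 1 + A * B + vecMulVec (-(X⁻¹ *ᵥ α)) (a ᵥ* B) := by
    rw [hAY, Matrix.sub_mul, Matrix.mul_sub, Matrix.mul_assoc X, ← Matrix.mul_assoc X⁻¹,
      nonsing_inv_mul X hX, Matrix.one_mul, vecMulVec_mul, mul_vecMulVec, neg_vecMulVec]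
    abel
  rw [← Matrix.mul_assoc, det_one_add_mul_comm, hconj, det_add_vecMulVec hC,
    mulVec_neg, dotProduct_neg, mulVec_mulVec, dotProduct_mulVec, vecMul_vecMul,
    ← Matrix.mul_assoc B, mul_nonsing_inv_one_add_mul A B hC, Matrix.mul_assoc, sub_eq_add_neg]

theorem det_one_add_mul_mul_nonsing_inv_eq_add {β : n → K} {b : m → K}
    (hB : Y * B - B * X = vecMulVec β b) (hX : IsUnit X.det) (hC : IsUnit (1 + A * B).det) :
    (1 + A * Y * (B * X⁻¹)).det
      = (1 + A * B).det * (1 + b ᵥ* (X⁻¹ * (1 + A * B)⁻¹ * A) ⬝ᵥ β) := by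
  have hYB : Y * B = B * X + vecMulVec β b := by rw [← hB, add_sub_cancel]
  have hexpand : 1 + A * Y * (B * X⁻¹) = 1 + A * B + vecMulVec (A *ᵥ β) (b ᵥ* X⁻¹) := by
    rw [← Matrix.mul_assoc, Matrix.mul_assoc A, hYB, Matrix.mul_add, Matrix.add_mul,
      ← Matrix.mul_assoc, Matrix.mul_assoc _ X, mul_nonsing_inv X hX, Matrix.mul_one,
      mul_vecMulVec, vecMulVec_mul, add_assoc]
  rw [hexpand, det_add_vecMulVec hC, mulVec_mulVec, dotProduct_mulVec, vecMul_vecMul,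
    Matrix.mul_assoc]

end Matrix

theorem statement1_general {n : ℕ} (l r : Fin n → ℂ)
    (α β a b : Fin n → ℂ)
    (A B : Matrix (Fin n) (Fin n) ℂ)
    (hA : Matrix.diagonal l * A - A * Matrix.diagonal r = Matrix.vecMulVec α a)
    (hB : Matrix.diagonal r * B - B * Matrix.diagonal l = Matrix.vecMulVec β b)
    (ζ : ℂ)
    (hζL : IsUnit (Matrix.diagonal l - ζ • (1 : Matrix (Fin n) (Fin n) ℂ)))
    (hinv : IsUnit (1 + A * B)) :
    (1 + A * (Matrix.diagonal r - ζ • 1) * (B * (Matrix.diagonal l - ζ • 1)⁻¹)).det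
        = (1 + A * B).det *
          (1 - Matrix.vecMul a
            ((1 + B * A)⁻¹ * (B * (Matrix.diagonal l - ζ • 1)⁻¹)) ⬝ᵥ α) ∧
    (1 + A * (Matrix.diagonal r - ζ • 1) * (B * (Matrix.diagonal l - ζ • 1)⁻¹)).det
        = (1 + A * B).det *
          (1 + Matrix.vecMul b
            ((Matrix.diagonal l - ζ • 1)⁻¹ * (1 + A * B)⁻¹ * A) ⬝ᵥ β) := by
  have hX := (isUnit_iff_isUnit_det _).mp hζL
  have hC := (isUnit_iff_isUnit_det _).mp hinv
  rw [← sub_smul_one_mul_sub_mul_sub_smul_one _ _ _ ζ] at hA hB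
  exact ⟨det_one_add_mul_mul_nonsing_inv_eq_sub hA hX hC,
    det_one_add_mul_mul_nonsing_inv_eq_add hB hX hC⟩

/-- for a parameter `ζ` with `R − ζ·1` and `L − ζ·1` invertible, the
inverse-shifted tau-function `τ[ζ̄] = det(1 + A(R−ζ) B(L−ζ)⁻¹)` satisfies
`τ[ζ̄] = τ·(1 − ⟨a|(1+BA)⁻¹B(L−ζ)⁻¹|α⟩)` and `τ[ζ̄] = τ·(1 + ⟨b|(L−ζ)⁻¹(1+AB)⁻¹A|β⟩)`. -/
theorem statement1 {n : ℕ} (hn : 1 ≤ n) (l r : Fin n → ℂ)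
    (hlr : ∀ j k, l j ≠ r k) (α β a b : Fin n → ℂ)
    (A B : Matrix (Fin n) (Fin n) ℂ)
    (hA : Matrix.diagonal l * A - A * Matrix.diagonal r = Matrix.vecMulVec α a)
    (hB : Matrix.diagonal r * B - B * Matrix.diagonal l = Matrix.vecMulVec β b)
    (ζ : ℂ)
    (hζR : IsUnit (Matrix.diagonal r - ζ • (1 : Matrix (Fin n) (Fin n) ℂ)))
    (hζL : IsUnit (Matrix.diagonal l - ζ • (1 : Matrix (Fin n) (Fin n) ℂ)))
    (hinv : IsUnit (1 + A * B))
    (hinv' : IsUnit (1 + A * (Matrix.diagonal r - ζ • 1) *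
        (B * (Matrix.diagonal l - ζ • 1)⁻¹))) :
    (1 + A * (Matrix.diagonal r - ζ • 1) * (B * (Matrix.diagonal l - ζ • 1)⁻¹)).det
        = (1 + A * B).det *
          (1 - Matrix.vecMul a
            ((1 + B * A)⁻¹ * (B * (Matrix.diagonal l - ζ • 1)⁻¹)) ⬝ᵥ α) ∧
    (1 + A * (Matrix.diagonal r - ζ • 1) * (B * (Matrix.diagonal l - ζ • 1)⁻¹)).det
        = (1 + A * B).det *
          (1 + Matrix.vecMul b
            ((Matrix.diagonal l - ζ • 1)⁻¹ * (1 + A * B)⁻¹ * A) ⬝ᵥ β) :=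
  statement1_general l r α β a b A B hA hB ζ hζL hinv
end

section
/- Under the stated assumptions, for any finite multisets X, Y of admissible parameters and any admissible parameter ζ, the shifted tau-functions satisfy (σ[X ζ] · τ[Y ζ̄]) / (τ[X] · τ[Y]) = ⟨a[X]| F[X] · K · F[Y] |β⟩, where K = (R−ζ)⁻¹ + B[Y](L−ζ)⁻¹ A[Y]. -/
open Matrix

noncomputable section

/-- The diagonal matrix `∏_{ξ ∈ X} (diagonal d − ξ·1)` for a multiset `X` of parameters. -/
def sProd {n : ℕ} (d : Fin n → ℂ) (X : Multiset ℂ) : Matrix (Fin n) (Fin n) ℂ :=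
  Matrix.diagonal fun i => (X.map fun ξ => d i - ξ).prod

/-- The multiset-shifted matrix `A[X] = A·∏_{ξ∈X}(R−ξ)⁻¹`. -/
def shA {n : ℕ} (r : Fin n → ℂ) (A : Matrix (Fin n) (Fin n) ℂ) (X : Multiset ℂ) :
    Matrix (Fin n) (Fin n) ℂ :=
  A * (sProd r X)⁻¹

/-- The multiset-shifted matrix `B[X] = B·∏_{ξ∈X}(L−ξ)`. -/
def shB {n : ℕ} (l : Fin n → ℂ) (B : Matrix (Fin n) (Fin n) ℂ) (X : Multiset ℂ) :
    Matrix (Fin n) (Fin n) ℂ :=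
  B * sProd l X

/-- The shifted tau-function `τ[X] = det(1 + A[X] B[X])`. -/
def shtau {n : ℕ} (l r : Fin n → ℂ) (A B : Matrix (Fin n) (Fin n) ℂ) (X : Multiset ℂ) : ℂ :=
  (1 + shA r A X * shB l B X).det

/-- The shifted tau-function `σ[X] = τ[X]·⟨a[X]|(1+B[X]A[X])⁻¹|β⟩`. -/
def shsigma {n : ℕ} (l r a β : Fin n → ℂ) (A B : Matrix (Fin n) (Fin n) ℂ)
    (X : Multiset ℂ) : ℂ :=
  shtau l r A B X *
    (Matrix.vecMul (Matrix.vecMul a (sProd r X)⁻¹) (1 + shB l B X * shA r A X)⁻¹ ⬝ᵥ β)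

/-- The shifted tau-function `ρ[X] = τ[X]·⟨b[X]|(1+A[X]B[X])⁻¹|α⟩`. -/
def shrho {n : ℕ} (l r b α : Fin n → ℂ) (A B : Matrix (Fin n) (Fin n) ℂ)
    (X : Multiset ℂ) : ℂ :=
  shtau l r A B X *
    (Matrix.vecMul (Matrix.vecMul b (sProd l X)) (1 + shA r A X * shB l B X)⁻¹ ⬝ᵥ α)

/-- A parameter `ξ` is admissible if `R − ξ·1` and `L − ξ·1` are invertible. -/
def Adm {n : ℕ} (l r : Fin n → ℂ) (ξ : ℂ) : Prop :=
  IsUnit (Matrix.diagonal r - ξ • (1 : Matrix (Fin n) (Fin n) ℂ)) ∧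
    IsUnit (Matrix.diagonal l - ξ • (1 : Matrix (Fin n) (Fin n) ℂ))

/-- `Γ_ξ(Y, X) = ∏_{η∈Y}(ξ−η) / ∏_{η∈X, η≠ξ}(ξ−η)`. -/
def Gam (Y : Multiset ℂ) (X : Finset ℂ) (ξ : ℂ) : ℂ :=
  (Y.map fun η => ξ - η).prod / ∏ η ∈ X.erase ξ, (ξ - η)

/-!
Write `R_ζ = R − ζ`, `L_ζ = L − ζ`. The Sylvester equation for `B` gives `R_ζ B = B L_ζ + |β⟩⟨b|`,
so both shifts by `ζ` are rank-one perturbations along `|β⟩` of conjugations: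
`1 + B[Xζ] A[Xζ] = R_ζ (1 + B[X] A[X]) R_ζ⁻¹ − |β⟩⟨v|` and `R_ζ B[Y] L_ζ⁻¹ = B[Y] + |β⟩⟨w|`.
In the first case `det H · H⁻¹|β⟩ = adj H |β⟩` does not see the perturbation, which gives
`σ[Xζ] = τ[X] ⟨a[X]| F[X] R_ζ⁻¹ |β⟩`. In the second, the matrix determinant lemma gives
`τ[Yζ̄] = τ[Y] (1 + μ)` with `μ = ⟨w| A[Y] F[Y] |β⟩`, and the same `μ` appears in
`K F[Y] |β⟩ = (1 + μ) R_ζ⁻¹ |β⟩`.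
-/

namespace Matrix

theorem sub_smul_one_eq_diagonal {ι K : Type*} [DecidableEq ι] [Ring K] (d : ι → K) (c : K) :
    diagonal d - c • (1 : Matrix ι ι K) = diagonal fun i => d i - c := by
  rw [smul_one_eq_diagonal, diagonal_sub]

variable {ι K : Type*} [Fintype ι] [DecidableEq ι] [CommRing K]

theorem isUnit_one_add_mul_comm {M N : Matrix ι ι K} :
    IsUnit (1 + M * N) ↔ IsUnit (1 + N * M) := by
  rw [isUnit_iff_isUnit_det, isUnit_iff_isUnit_det, det_one_add_mul_comm]

theorem inv_one_add_mul_mul {M N : Matrix ι ι K} (h : IsUnit (1 + M * N)) :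
    (1 + M * N)⁻¹ * M = M * (1 + N * M)⁻¹ := by
  have h' := (isUnit_iff_isUnit_det _).1 (isUnit_one_add_mul_comm.1 h)
  have hdet := (isUnit_iff_isUnit_det _).1 h
  calc (1 + M * N)⁻¹ * M = (1 + M * N)⁻¹ * (M * (1 + N * M)) * (1 + N * M)⁻¹ := by
        rw [← Matrix.mul_assoc, mul_nonsing_inv_cancel_right _ _ h']
    _ = (1 + M * N)⁻¹ * ((1 + M * N) * M) * (1 + N * M)⁻¹ := by noncomm_ring
    _ = M * (1 + N * M)⁻¹ := by rw [← Matrix.mul_assoc, nonsing_inv_mul _ hdet, Matrix.one_mul]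

theorem det_add_vecMulVec_s6 {D : Matrix ι ι K} (hD : IsUnit D) (x y : ι → K) :
    (D + vecMulVec x y).det = D.det * (1 + y ⬝ᵥ (D⁻¹ *ᵥ x)) := by
  have hDd := (isUnit_iff_isUnit_det D).1 hD
  have : D + vecMulVec x y = D * (1 + vecMulVec (D⁻¹ *ᵥ x) y) := by
    rw [Matrix.mul_add, Matrix.mul_one, mul_vecMulVec, mulVec_mulVec, mul_nonsing_inv _ hDd,
      one_mulVec]
  rw [this, det_mul, vecMulVec_eq Unit, det_one_add_replicateCol_mul_replicateRow]

theorem det_smul_inv_mulVec_of_eq_sub_vecMulVec {D H : Matrix ι ι K} (hD : IsUnit D)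
    (hH : IsUnit H) {x y : ι → K} (h : H = D - vecMulVec x y) :
    H.det • (H⁻¹ *ᵥ x) = D.det • (D⁻¹ *ᵥ x) := by
  set c := y ⬝ᵥ (D⁻¹ *ᵥ x)
  have hdet : H.det = D.det * (1 - c) := by
    rw [h, sub_eq_add_neg, ← neg_vecMulVec, det_add_vecMulVec_s6 hD, mulVec_neg, dotProduct_neg,
      ← sub_eq_add_neg]
  have hHx : H *ᵥ (D⁻¹ *ᵥ x) = (1 - c) • x := by
    rw [h, sub_mulVec, mulVec_mulVec, mul_nonsing_inv _ ((isUnit_iff_isUnit_det D).1 hD),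
      one_mulVec, vecMulVec_mulVec, op_smul_eq_smul, sub_smul, one_smul]
  have hDx : D⁻¹ *ᵥ x = (1 - c) • (H⁻¹ *ᵥ x) := by
    rw [← mulVec_smul, ← hHx, mulVec_mulVec,
      nonsing_inv_mul _ ((isUnit_iff_isUnit_det H).1 hH), one_mulVec]
  rw [hdet, hDx, smul_smul]

section RankOneConjugate

variable {R N M B' : Matrix ι ι K} {x w : ι → K}

theorem det_one_add_mul_mul_of_mul_eq_add_vecMulVec (hN : R * N = B' + vecMulVec x w)
    (hE : IsUnit (1 + M * B')) :
    (1 + M * R * N).det = (1 + M * B').det * (1 + w ⬝ᵥ (M *ᵥ ((1 + B' * M)⁻¹ *ᵥ x))) := by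
  have : 1 + M * R * N = (1 + M * B') + vecMulVec (M *ᵥ x) w := by
    rw [Matrix.mul_assoc, hN, Matrix.mul_add, mul_vecMulVec, add_assoc]
  rw [this, det_add_vecMulVec_s6 hE, mulVec_mulVec, inv_one_add_mul_mul hE, ← mulVec_mulVec]

theorem add_mul_mulVec_inv_one_add_mul (hN : R * N = B' + vecMulVec x w) {S : Matrix ι ι K}
    (hS : S * R = 1) (hF : IsUnit (1 + B' * M)) :
    (S + N * M) *ᵥ ((1 + B' * M)⁻¹ *ᵥ x)
      = (1 + w ⬝ᵥ (M *ᵥ ((1 + B' * M)⁻¹ *ᵥ x))) • (S *ᵥ x) := by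
  set g := (1 + B' * M)⁻¹ *ᵥ x
  have hx : x = g + B' *ᵥ (M *ᵥ g) := calc
    x = (1 + B' * M) *ᵥ g := by
      rw [mulVec_mulVec, mul_nonsing_inv _ ((isUnit_iff_isUnit_det _).1 hF), one_mulVec]
    _ = g + B' *ᵥ (M *ᵥ g) := by rw [add_mulVec, one_mulVec, ← mulVec_mulVec]
  have hN' : N = S * B' + vecMulVec (S *ᵥ x) w := by
    rw [← mul_vecMulVec, ← Matrix.mul_add, ← hN, ← Matrix.mul_assoc, hS, Matrix.one_mul]
  rw [add_mulVec, ← mulVec_mulVec, hN', add_mulVec, vecMulVec_mulVec, op_smul_eq_smul,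
    ← mulVec_mulVec, ← add_assoc, ← mulVec_add, ← hx, add_smul, one_smul]

end RankOneConjugate

end Matrix

section Shift

variable {n : ℕ}

theorem sProd_cons (d : Fin n → ℂ) (ζ : ℂ) (X : Multiset ℂ) :
    sProd d (ζ ::ₘ X) = (diagonal d - ζ • 1) * sProd d X := by
  simp only [sProd, sub_smul_one_eq_diagonal, diagonal_mul_diagonal, Multiset.map_cons,
    Multiset.prod_cons]

theorem commute_sub_smul_one_sProd (d d' : Fin n → ℂ) (ζ : ℂ) (X : Multiset ℂ) :
    Commute (diagonal d - ζ • 1) (sProd d' X) := by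
  rw [sub_smul_one_eq_diagonal]
  exact commute_diagonal _ _

theorem shA_cons (r : Fin n → ℂ) (A : Matrix (Fin n) (Fin n) ℂ) (ζ : ℂ) (X : Multiset ℂ) :
    shA r A (ζ ::ₘ X) = shA r A X * (diagonal r - ζ • 1)⁻¹ := by
  rw [shA, shA, sProd_cons, Matrix.mul_inv_rev, Matrix.mul_assoc]

variable {l r β b : Fin n → ℂ} {B : Matrix (Fin n) (Fin n) ℂ}
  (hB : diagonal r * B - B * diagonal l = vecMulVec β b) (ζ : ℂ)
include hB

theorem sub_smul_one_mul_of_sylvester :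
    (diagonal r - ζ • 1) * B = B * (diagonal l - ζ • 1) + vecMulVec β b := by
  rw [← hB, Matrix.sub_mul, Matrix.mul_sub, smul_mul_assoc, mul_smul_comm, Matrix.one_mul,
    Matrix.mul_one]
  abel

theorem shB_cons (X : Multiset ℂ) :
    shB l B (ζ ::ₘ X) = (diagonal r - ζ • 1) * shB l B X - vecMulVec β (b ᵥ* sProd l X) := by
  rw [shB, shB, sProd_cons, ← Matrix.mul_assoc, ← Matrix.mul_assoc,
    sub_smul_one_mul_of_sylvester hB, Matrix.add_mul, vecMulVec_mul]
  abel

theorem sub_smul_one_mul_shB_mul_inv (hL : IsUnit (diagonal l - ζ • 1)) (Y : Multiset ℂ) :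
    (diagonal r - ζ • 1) * (shB l B Y * (diagonal l - ζ • 1)⁻¹)
      = shB l B Y + vecMulVec β (b ᵥ* (sProd l Y * (diagonal l - ζ • 1)⁻¹)) := by
  rw [shB, ← Matrix.mul_assoc, ← Matrix.mul_assoc, sub_smul_one_mul_of_sylvester hB,
    Matrix.add_mul, Matrix.add_mul, Matrix.mul_assoc B, (commute_sub_smul_one_sProd l l ζ Y).eq,
    ← Matrix.mul_assoc B, mul_nonsing_inv_cancel_right _ _ ((isUnit_iff_isUnit_det _).1 hL),
    vecMulVec_mul, vecMulVec_mul, vecMul_vecMul]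

theorem one_add_shB_cons_mul_shA_cons (hR : IsUnit (diagonal r - ζ • 1))
    (A : Matrix (Fin n) (Fin n) ℂ) (X : Multiset ℂ) :
    1 + shB l B (ζ ::ₘ X) * shA r A (ζ ::ₘ X)
      = (diagonal r - ζ • 1) * (1 + shB l B X * shA r A X) * (diagonal r - ζ • 1)⁻¹
        - vecMulVec β ((b ᵥ* sProd l X) ᵥ* (shA r A X * (diagonal r - ζ • 1)⁻¹)) := by
  rw [shA_cons, shB_cons hB, Matrix.sub_mul, vecMulVec_mul, Matrix.mul_add, Matrix.add_mul,
    Matrix.mul_one, mul_nonsing_inv _ ((isUnit_iff_isUnit_det _).1 hR)]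
  simp only [Matrix.mul_assoc]
  abel

theorem shsigma_cons (hR : IsUnit (diagonal r - ζ • 1)) (a : Fin n → ℂ)
    {A : Matrix (Fin n) (Fin n) ℂ} {X : Multiset ℂ} (hiX : IsUnit (1 + shA r A X * shB l B X))
    (hiXz : IsUnit (1 + shA r A (ζ ::ₘ X) * shB l B (ζ ::ₘ X))) :
    shsigma l r a β A B (ζ ::ₘ X)
      = shtau l r A B X * ((a ᵥ* (sProd r X)⁻¹) ⬝ᵥ
          ((1 + shB l B X * shA r A X)⁻¹ *ᵥ ((diagonal r - ζ • 1)⁻¹ *ᵥ β))) := by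
  have hD : IsUnit
      ((diagonal r - ζ • 1) * (1 + shB l B X * shA r A X) * (diagonal r - ζ • 1)⁻¹) :=
    (hR.mul (isUnit_one_add_mul_comm.1 hiX)).mul (isUnit_nonsing_inv_iff.2 hR)
  rw [shsigma, shtau, det_one_add_mul_comm, ← dotProduct_mulVec, ← smul_eq_mul,
    ← dotProduct_smul, det_smul_inv_mulVec_of_eq_sub_vecMulVec hD (isUnit_one_add_mul_comm.1 hiXz)
      (one_add_shB_cons_mul_shA_cons hB ζ hR A X)]
  have hRd := (isUnit_iff_isUnit_det _).1 hR
  rw [det_conj hR, ← det_one_add_mul_comm, dotProduct_smul, smul_eq_mul, Matrix.mul_inv_rev,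
    Matrix.mul_inv_rev, nonsing_inv_nonsing_inv _ hRd, sProd_cons, Matrix.mul_inv_rev,
    ← vecMul_vecMul, ← dotProduct_mulVec, mulVec_mulVec, ← Matrix.mul_assoc, ← Matrix.mul_assoc,
    nonsing_inv_mul _ hRd, Matrix.one_mul, ← mulVec_mulVec]
  rfl

end Shift

theorem statement6_general {n : ℕ} (l r : Fin n → ℂ)
    (β a b : Fin n → ℂ)
    (A B : Matrix (Fin n) (Fin n) ℂ)
    (hB : Matrix.diagonal r * B - B * Matrix.diagonal l = Matrix.vecMulVec β b)
    (X Y : Multiset ℂ) (ζ : ℂ)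
    (hζ : Adm l r ζ)
    (hiX : IsUnit (1 + shA r A X * shB l B X))
    (hiY : IsUnit (1 + shA r A Y * shB l B Y))
    (hiXz : IsUnit (1 + shA r A (ζ ::ₘ X) * shB l B (ζ ::ₘ X))) :
    shsigma l r a β A B (ζ ::ₘ X) *
        (1 + (shA r A Y * (Matrix.diagonal r - ζ • 1)) *
          (shB l B Y * (Matrix.diagonal l - ζ • 1)⁻¹)).det /
        (shtau l r A B X * shtau l r A B Y)
      = Matrix.vecMul (Matrix.vecMul a (sProd r X)⁻¹)
          ((1 + shB l B X * shA r A X)⁻¹ *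
            ((Matrix.diagonal r - ζ • 1)⁻¹
              + shB l B Y * (Matrix.diagonal l - ζ • 1)⁻¹ * shA r A Y) *
            (1 + shB l B Y * shA r A Y)⁻¹) ⬝ᵥ β := by
  obtain ⟨hR, hL⟩ := hζ
  have hconj := sub_smul_one_mul_shB_mul_inv hB ζ hL Y
  have hτX : shtau l r A B X ≠ 0 := ((isUnit_iff_isUnit_det _).1 hiX).ne_zero
  have hτY : shtau l r A B Y ≠ 0 := ((isUnit_iff_isUnit_det _).1 hiY).ne_zero
  rw [shsigma_cons hB ζ hR a hiX hiXz, det_one_add_mul_mul_of_mul_eq_add_vecMulVec hconj hiY,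
    ← dotProduct_mulVec (a ᵥ* _), ← mulVec_mulVec, ← mulVec_mulVec,
    add_mul_mulVec_inv_one_add_mul hconj (nonsing_inv_mul _ ((isUnit_iff_isUnit_det _).1 hR))
      (isUnit_one_add_mul_comm.1 hiY),
    mulVec_smul, dotProduct_smul, smul_eq_mul, ← shtau]
  field_simp

/-- `(σ[Xζ]·τ[Yζ̄])/(τ[X]·τ[Y]) = ⟨a[X]|F[X]·K·F[Y]|β⟩` with
`K = (R−ζ)⁻¹ + B[Y](L−ζ)⁻¹A[Y]`. -/
theorem statement6 {n : ℕ} (hn : 1 ≤ n) (l r : Fin n → ℂ)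
    (hlr : ∀ j k, l j ≠ r k) (α β a b : Fin n → ℂ)
    (A B : Matrix (Fin n) (Fin n) ℂ)
    (hA : Matrix.diagonal l * A - A * Matrix.diagonal r = Matrix.vecMulVec α a)
    (hB : Matrix.diagonal r * B - B * Matrix.diagonal l = Matrix.vecMulVec β b)
    (X Y : Multiset ℂ) (ζ : ℂ)
    (hX : ∀ ξ ∈ X, Adm l r ξ) (hY : ∀ ξ ∈ Y, Adm l r ξ) (hζ : Adm l r ζ)
    (hiX : IsUnit (1 + shA r A X * shB l B X))
    (hiY : IsUnit (1 + shA r A Y * shB l B Y))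
    (hiXz : IsUnit (1 + shA r A (ζ ::ₘ X) * shB l B (ζ ::ₘ X)))
    (hiYz : IsUnit (1 + (shA r A Y * (Matrix.diagonal r - ζ • 1)) *
        (shB l B Y * (Matrix.diagonal l - ζ • 1)⁻¹))) :
    shsigma l r a β A B (ζ ::ₘ X) *
        (1 + (shA r A Y * (Matrix.diagonal r - ζ • 1)) *
          (shB l B Y * (Matrix.diagonal l - ζ • 1)⁻¹)).det /
        (shtau l r A B X * shtau l r A B Y)
      = Matrix.vecMul (Matrix.vecMul a (sProd r X)⁻¹)
          ((1 + shB l B X * shA r A X)⁻¹ *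
            ((Matrix.diagonal r - ζ • 1)⁻¹
              + shB l B Y * (Matrix.diagonal l - ζ • 1)⁻¹ * shA r A Y) *
            (1 + shB l B Y * shA r A Y)⁻¹) ⬝ᵥ β :=
  statement6_general l r β a b A B hB X Y ζ hζ hiX hiY hiXz
end
end

section
/- Under the stated assumptions, for any admissible parameter ζ one has, as an identity of column vectors, (R − ζ)·[ (R−ζ)⁻¹ + B(L−ζ)⁻¹A ]·F·|β⟩ = (τ[ζ̄]/τ)·|β⟩, where τ[ζ̄] = det(1 + A(R−ζ) B(L−ζ)⁻¹) is the inverse-shifted tau-function; equivalently, (R − ζ)·[ (R−ζ)⁻¹ + B(L−ζ)⁻¹A ]·F·|β⟩ = (1 + ⟨b|(L−ζ)⁻¹ G A |β⟩)·|β⟩. -/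
/-!
The rank-one Sylvester relation `R B - B L = |β⟩⟨b|` (stable under the shift `R, L ↦ R - ζ, L - ζ`)
gives `R B L⁻¹ = B + |β⟩⟨b| L⁻¹`. Hence `R (R⁻¹ + B L⁻¹ A) = (1 + B A) + |β⟩⟨b| L⁻¹ A`, and
multiplying by `F = (1 + B A)⁻¹`, with the push-through identity `A F = G A`, leaves the rank-one
perturbation `1 + |β⟩⟨b| L⁻¹ G A` of the identity, which acts on `|β⟩` as the scalar
`1 + ⟨b| L⁻¹ G A |β⟩`. Likewise `1 + A R B L⁻¹ = (1 + A B) + A|β⟩⟨b|L⁻¹`, and the matrix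
determinant lemma identifies the ratio `τ[ζ̄] / τ` with the same scalar.
-/

open Matrix

namespace Matrix

variable {m n K : Type*} [Fintype m] [Fintype n] [DecidableEq m] [DecidableEq n] [CommRing K]

theorem mul_nonsing_inv_one_add_mul_comm (A : Matrix m n K) (B : Matrix n m K)
    (hAB : IsUnit (1 + A * B).det) : A * (1 + B * A)⁻¹ = (1 + A * B)⁻¹ * A := by
  have hBA : IsUnit (1 + B * A).det := by rwa [← det_one_add_mul_comm]
  have push : (1 + A * B) * A = A * (1 + B * A) := by
    rw [Matrix.add_mul, Matrix.mul_add, Matrix.one_mul, Matrix.mul_one, Matrix.mul_assoc]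
  calc A * (1 + B * A)⁻¹ = (1 + A * B)⁻¹ * ((1 + A * B) * A) * (1 + B * A)⁻¹ := by
        rw [nonsing_inv_mul_cancel_left _ _ hAB]
    _ = (1 + A * B)⁻¹ * A := by
        rw [push, Matrix.mul_assoc, mul_nonsing_inv_cancel_right _ _ hBA]

theorem det_one_add_vecMulVec (u v : m → K) : (1 + vecMulVec u v).det = 1 + v ⬝ᵥ u := by
  rw [vecMulVec_eq Unit, det_one_add_replicateCol_mul_replicateRow]

theorem sub_smul_one_mul_sub_mul_sub_smul_one_s8 (R L B : Matrix m m K) (ζ : K) :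
    (R - ζ • 1) * B - B * (L - ζ • 1) = R * B - B * L := by
  simp only [Matrix.sub_mul, Matrix.mul_sub, Matrix.smul_mul, Matrix.mul_smul, Matrix.one_mul,
    Matrix.mul_one]
  abel

section RankOneSylvester

variable {R L A B : Matrix m m K} {β b : m → K}

theorem mul_mul_nonsing_inv_of_mul_sub_mul_eq_vecMulVec (hRB : R * B - B * L = vecMulVec β b)
    (hL : IsUnit L.det) (X : Matrix m m K) :
    R * B * L⁻¹ * X = B * X + vecMulVec β (b ᵥ* (L⁻¹ * X)) := by
  rw [eq_add_of_sub_eq hRB, Matrix.add_mul, Matrix.add_mul, mul_nonsing_inv_cancel_right _ _ hL,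
    vecMulVec_mul, vecMulVec_mul, vecMul_vecMul, add_comm]

theorem mul_nonsing_inv_add_mul_mul_nonsing_inv_one_add_mul
    (hRB : R * B - B * L = vecMulVec β b) (hR : IsUnit R.det) (hL : IsUnit L.det)
    (hAB : IsUnit (1 + A * B).det) :
    R * (R⁻¹ + B * L⁻¹ * A) * (1 + B * A)⁻¹ =
      1 + vecMulVec β (b ᵥ* (L⁻¹ * (1 + A * B)⁻¹ * A)) := by
  have hBA : IsUnit (1 + B * A).det := by rwa [← det_one_add_mul_comm]
  have expand : R * (R⁻¹ + B * L⁻¹ * A) = (1 + B * A) + vecMulVec β (b ᵥ* (L⁻¹ * A)) := by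
    rw [Matrix.mul_add, mul_nonsing_inv _ hR, ← Matrix.mul_assoc, ← Matrix.mul_assoc,
      mul_mul_nonsing_inv_of_mul_sub_mul_eq_vecMulVec hRB hL, add_assoc]
  rw [expand, Matrix.add_mul, mul_nonsing_inv _ hBA, vecMulVec_mul, vecMul_vecMul,
    Matrix.mul_assoc, mul_nonsing_inv_one_add_mul_comm A B hAB, Matrix.mul_assoc]

theorem mul_nonsing_inv_add_mul_mul_nonsing_inv_one_add_mul_mulVec
    (hRB : R * B - B * L = vecMulVec β b) (hR : IsUnit R.det) (hL : IsUnit L.det)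
    (hAB : IsUnit (1 + A * B).det) :
    (R * (R⁻¹ + B * L⁻¹ * A) * (1 + B * A)⁻¹) *ᵥ β =
      (1 + b ᵥ* (L⁻¹ * (1 + A * B)⁻¹ * A) ⬝ᵥ β) • β := by
  rw [mul_nonsing_inv_add_mul_mul_nonsing_inv_one_add_mul hRB hR hL hAB, add_mulVec, one_mulVec,
    vecMulVec_mulVec, op_smul_eq_smul, add_smul, one_smul]

theorem det_one_add_mul_mul_mul_nonsing_inv (hRB : R * B - B * L = vecMulVec β b)
    (hL : IsUnit L.det) (hAB : IsUnit (1 + A * B).det) :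
    (1 + A * R * (B * L⁻¹)).det =
      (1 + A * B).det * (1 + b ᵥ* (L⁻¹ * (1 + A * B)⁻¹ * A) ⬝ᵥ β) := by
  have factor : 1 + A * R * (B * L⁻¹) =
      (1 + A * B) * (1 + vecMulVec ((1 + A * B)⁻¹ *ᵥ (A *ᵥ β)) (b ᵥ* L⁻¹)) := by
    have hRBL := mul_mul_nonsing_inv_of_mul_sub_mul_eq_vecMulVec hRB hL 1
    rw [Matrix.mul_one, Matrix.mul_one, Matrix.mul_one, Matrix.mul_assoc] at hRBL
    rw [Matrix.mul_assoc A R, hRBL, Matrix.mul_add, Matrix.mul_add, Matrix.mul_one, mul_vecMulVec,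
      mul_vecMulVec, mulVec_mulVec, mul_nonsing_inv _ hAB, one_mulVec, add_assoc]
  rw [factor, det_mul, det_one_add_vecMulVec, dotProduct_mulVec, dotProduct_mulVec, vecMul_vecMul,
    vecMul_vecMul, Matrix.mul_assoc]

end RankOneSylvester

end Matrix

theorem statement8_general {n : ℕ} (l r : Fin n → ℂ)
    (β b : Fin n → ℂ)
    (A B : Matrix (Fin n) (Fin n) ℂ)
    (hB : Matrix.diagonal r * B - B * Matrix.diagonal l = Matrix.vecMulVec β b)
    (ζ : ℂ)
    (hζR : IsUnit (Matrix.diagonal r - ζ • (1 : Matrix (Fin n) (Fin n) ℂ)))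
    (hζL : IsUnit (Matrix.diagonal l - ζ • (1 : Matrix (Fin n) (Fin n) ℂ)))
    (hinv : IsUnit (1 + A * B)) :
    Matrix.mulVec
        ((Matrix.diagonal r - ζ • 1) *
          ((Matrix.diagonal r - ζ • 1)⁻¹ + B * (Matrix.diagonal l - ζ • 1)⁻¹ * A) *
          (1 + B * A)⁻¹) β
      = ((1 + A * (Matrix.diagonal r - ζ • 1) * (B * (Matrix.diagonal l - ζ • 1)⁻¹)).det /
          (1 + A * B).det) • β ∧
    Matrix.mulVec
        ((Matrix.diagonal r - ζ • 1) *
          ((Matrix.diagonal r - ζ • 1)⁻¹ + B * (Matrix.diagonal l - ζ • 1)⁻¹ * A) *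
          (1 + B * A)⁻¹) β
      = (1 + Matrix.vecMul b
            ((Matrix.diagonal l - ζ • 1)⁻¹ * (1 + A * B)⁻¹ * A) ⬝ᵥ β) • β := by
  have hRB := (sub_smul_one_mul_sub_mul_sub_smul_one_s8 _ _ B ζ).trans hB
  have hR := (isUnit_iff_isUnit_det _).mp hζR
  have hL := (isUnit_iff_isUnit_det _).mp hζL
  have hAB := (isUnit_iff_isUnit_det _).mp hinv
  have hvec := mul_nonsing_inv_add_mul_mul_nonsing_inv_one_add_mul_mulVec hRB hR hL hAB
  refine ⟨?_, hvec⟩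
  rw [hvec, det_one_add_mul_mul_mul_nonsing_inv hRB hL hAB, mul_div_cancel_left₀ _ hAB.ne_zero]

/-- as an identity of column vectors,
`(R−ζ)·[(R−ζ)⁻¹ + B(L−ζ)⁻¹A]·F·|β⟩ = (τ[ζ̄]/τ)·|β⟩`, where
`τ[ζ̄] = det(1 + A(R−ζ)B(L−ζ)⁻¹)`; equivalently the left-hand side equals
`(1 + ⟨b|(L−ζ)⁻¹GA|β⟩)·|β⟩`. -/
theorem statement8 {n : ℕ} (hn : 1 ≤ n) (l r : Fin n → ℂ)
    (hlr : ∀ j k, l j ≠ r k) (α β a b : Fin n → ℂ)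
    (A B : Matrix (Fin n) (Fin n) ℂ)
    (hA : Matrix.diagonal l * A - A * Matrix.diagonal r = Matrix.vecMulVec α a)
    (hB : Matrix.diagonal r * B - B * Matrix.diagonal l = Matrix.vecMulVec β b)
    (ζ : ℂ)
    (hζR : IsUnit (Matrix.diagonal r - ζ • (1 : Matrix (Fin n) (Fin n) ℂ)))
    (hζL : IsUnit (Matrix.diagonal l - ζ • (1 : Matrix (Fin n) (Fin n) ℂ)))
    (hinv : IsUnit (1 + A * B))
    (hinv' : IsUnit (1 + A * (Matrix.diagonal r - ζ • 1) *
        (B * (Matrix.diagonal l - ζ • 1)⁻¹))) :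
    Matrix.mulVec
        ((Matrix.diagonal r - ζ • 1) *
          ((Matrix.diagonal r - ζ • 1)⁻¹ + B * (Matrix.diagonal l - ζ • 1)⁻¹ * A) *
          (1 + B * A)⁻¹) β
      = ((1 + A * (Matrix.diagonal r - ζ • 1) * (B * (Matrix.diagonal l - ζ • 1)⁻¹)).det /
          (1 + A * B).det) • β ∧
    Matrix.mulVec
        ((Matrix.diagonal r - ζ • 1) *
          ((Matrix.diagonal r - ζ • 1)⁻¹ + B * (Matrix.diagonal l - ζ • 1)⁻¹ * A) *
          (1 + B * A)⁻¹) β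
      = (1 + Matrix.vecMul b
            ((Matrix.diagonal l - ζ • 1)⁻¹ * (1 + A * B)⁻¹ * A) ⬝ᵥ β) • β :=
  statement8_general l r β b A B hB ζ hζR hζL hinv
end
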